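/- arXiv:1212.5324 — 2 statements merged into one kernel-verified Lean document; each statement's English description precedes it below -/
import Mathlib

section
/- Let k, n ≥ 1 be integers and let 0 ≤ ρ ≤ 1 − 1/(2k). Then for all functions f, g : {−1,1}ⁿ → ℝ, one has 4^{−n} Σ_{x,y ∈ {−1,1}ⁿ} (∏_{i=1}^{n} (1 + ρ xᵢ yᵢ)) · f(x)^{2k} g(y)^{2k} ≥ (2^{−n} Σ_{x} f(x))^{2k} · (2^{−n} Σ_{y} g(y))^{2k}. -/
/-!
Both sides can be computed by conditioning on the first coordinate: the means average over it,
and the weight `∏ i, (1 + ρ xᵢ yᵢ)` splits off its first factor. By induction on `n` it therefore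
suffices to prove the inequality on a single bit, for arbitrary functions (applied to the
conditional means, it is then summed against the weights `1 ± ρ ≥ 0`).

On one bit, replace `f, g` by `|f|, |g|` and write `f x = u (1 + s x)`, `g y = w (1 + t y)` with
`s, t ∈ [-1, 1]`. Then `(1 + s x) ^ m = P(s) + R(s) x`, where `P`, `R` are the even and odd parts
of `(1 + s) ^ m`, and the claim becomes `1 ≤ P(s) P(t) + ρ R(s) R(t)`. This follows from
`ρ R² ≤ P² - 1` together with `(X Y - 1)² ≥ (X² - 1) (Y² - 1)`; and `ρ R² ≤ P² - 1` holds for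
`ρ ≤ 1 - 1/m` because `P² - R² = (1 - s²) ^ m ≥ 1 - m s²` and `P ≥ 1 + C(m, 2) s²`.
-/

/-- The point of the cube `{−1,1}` encoded by a Boolean. -/
def sgn (b : Bool) : ℝ := if b then 1 else -1

open Finset

@[simp] theorem sgn_true : sgn true = 1 := rfl

@[simp] theorem sgn_false : sgn false = -1 := rfl

noncomputable def evenPart (m : ℕ) (s : ℝ) : ℝ := ((1 + s) ^ m + (1 - s) ^ m) / 2

noncomputable def oddPart (m : ℕ) (s : ℝ) : ℝ := ((1 + s) ^ m - (1 - s) ^ m) / 2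

theorem two_add_two_mul_choose_two_mul_sq_le (m : ℕ) (s : ℝ) :
    2 + 2 * m.choose 2 * s ^ 2 ≤ (1 + s) ^ m + (1 - s) ^ m := by
  obtain hm | hm := lt_or_ge m 2
  · interval_cases m <;> norm_num
  have expand (a : ℝ) : (1 + a) ^ m = ∑ i ∈ range (m + 1), a ^ i * m.choose i := by
    rw [add_comm, add_pow]; simp
  have term_nonneg (i : ℕ) : 0 ≤ s ^ i * m.choose i + (-s) ^ i * m.choose i := by
    rcases i.even_or_odd with h | h
    · rw [h.neg_pow]; have := h.pow_nonneg s; positivity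
    · rw [h.neg_pow]; simp
  rw [sub_eq_add_neg, expand, expand, ← sum_add_distrib]
  calc 2 + 2 * m.choose 2 * s ^ 2
      = ∑ i ∈ {0, 2}, (s ^ i * m.choose i + (-s) ^ i * m.choose i) := by
        simp only [sum_pair two_ne_zero.symm, pow_zero, Nat.choose_zero_right, Nat.cast_one,
          even_two.neg_pow]
        ring
    _ ≤ _ := sum_le_sum_of_subset_of_nonneg (by intro i; simp only [mem_insert, mem_singleton, mem_range]; omega) fun i _ _ => term_nonneg i

theorem one_add_choose_two_mul_sq_le_evenPart (m : ℕ) (s : ℝ) :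
    1 + m.choose 2 * s ^ 2 ≤ evenPart m s := by
  have := two_add_two_mul_choose_two_mul_sq_le m s
  rw [evenPart]; linarith

theorem one_le_evenPart (m : ℕ) (s : ℝ) : 1 ≤ evenPart m s := by
  have := one_add_choose_two_mul_sq_le_evenPart m s
  have : (0 : ℝ) ≤ m.choose 2 * s ^ 2 := by positivity
  linarith

theorem evenPart_sq_sub_oddPart_sq (m : ℕ) (s : ℝ) :
    evenPart m s ^ 2 - oddPart m s ^ 2 = (1 - s ^ 2) ^ m := by
  rw [evenPart, oddPart, show 1 - s ^ 2 = (1 + s) * (1 - s) by ring, mul_pow]; ring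

theorem mul_oddPart_sq_le {m : ℕ} (hm : 0 < m) {ρ s : ℝ} (hρ : ρ ≤ 1 - 1 / m) (hs : s ^ 2 ≤ 1) :
    ρ * oddPart m s ^ 2 ≤ evenPart m s ^ 2 - 1 := by
  set c : ℝ := 1 / m
  have hcm : c * m = 1 := one_div_mul_cancel (by positivity)
  have hc1 : c ≤ 1 := by
    rw [div_le_one (by positivity)]; exact_mod_cast hm
  have hc0 : 0 ≤ c := by positivity
  have hP : 1 + m * (m - 1) * s ^ 2 ≤ evenPart m s ^ 2 := by
    have h := one_add_choose_two_mul_sq_le_evenPart m s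
    have hX : (0 : ℝ) ≤ m.choose 2 * s ^ 2 := by positivity
    rw [Nat.cast_choose_two] at h hX
    nlinarith
  have hQ : 1 - m * s ^ 2 ≤ (1 - s ^ 2) ^ m := by
    have := one_add_mul_le_pow (a := -s ^ 2) (by linarith) m
    rw [← sub_eq_add_neg] at this; linarith
  -- convex combination: the `s ^ 2` terms cancel because `c * m = 1`
  have key : 1 ≤ c * evenPart m s ^ 2 + (1 - c) * (1 - s ^ 2) ^ m := by
    have h1 := mul_le_mul_of_nonneg_left hP hc0
    have h2 := mul_le_mul_of_nonneg_left hQ (sub_nonneg.2 hc1)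
    have : c * (1 + m * (m - 1) * s ^ 2) + (1 - c) * (1 - m * s ^ 2) = 1 := by
      linear_combination (m : ℝ) * s ^ 2 * hcm
    linarith
  calc ρ * oddPart m s ^ 2 ≤ (1 - c) * oddPart m s ^ 2 := by gcongr
    _ = (1 - c) * (evenPart m s ^ 2 - (1 - s ^ 2) ^ m) := by
      rw [← evenPart_sq_sub_oddPart_sq]; ring
    _ ≤ evenPart m s ^ 2 - 1 := by linarith

theorem one_le_mul_add_mul_of_mul_sq_le {ρ X Y x y : ℝ} (hρ : 0 ≤ ρ) (hX : 1 ≤ X) (hY : 1 ≤ Y)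
    (hx : ρ * x ^ 2 ≤ X ^ 2 - 1) (hy : ρ * y ^ 2 ≤ Y ^ 2 - 1) : 1 ≤ X * Y + ρ * (x * y) := by
  -- `(ρ x y) ^ 2 ≤ (X ^ 2 - 1) (Y ^ 2 - 1) ≤ (X Y - 1) ^ 2`
  have hXY : 1 ≤ X * Y := by nlinarith
  have hprod : (ρ * x ^ 2) * (ρ * y ^ 2) ≤ (X ^ 2 - 1) * (Y ^ 2 - 1) :=
    mul_le_mul hx hy (by positivity) (by nlinarith)
  nlinarith [sq_nonneg (X - Y), sq_nonneg (X * Y - 1 + ρ * (x * y))]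

theorem one_le_evenPart_mul_add_oddPart_mul {m : ℕ} (hm : 0 < m) {ρ s t : ℝ} (hρ0 : 0 ≤ ρ)
    (hρ : ρ ≤ 1 - 1 / m) (hs : s ^ 2 ≤ 1) (ht : t ^ 2 ≤ 1) :
    1 ≤ evenPart m s * evenPart m t + ρ * (oddPart m s * oddPart m t) :=
  one_le_mul_add_mul_of_mul_sq_le hρ0 (one_le_evenPart m s) (one_le_evenPart m t)
    (mul_oddPart_sq_le hm hρ hs) (mul_oddPart_sq_le hm hρ ht)

theorem one_add_mul_sgn_pow (m : ℕ) (s : ℝ) (x : Bool) :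
    (1 + s * sgn x) ^ m = evenPart m s + oddPart m s * sgn x := by
  cases x <;> simp only [sgn_true, sgn_false, evenPart, oddPart] <;> ring

noncomputable def bitMean (a : Bool → ℝ) : ℝ := 2⁻¹ * ∑ x, a x

noncomputable def bitCorr (ρ : ℝ) (T : Bool → Bool → ℝ) : ℝ :=
  4⁻¹ * ∑ x, ∑ y, (1 + ρ * sgn x * sgn y) * T x y

theorem bitCorr_mono {ρ : ℝ} (hρ0 : -1 ≤ ρ) (hρ1 : ρ ≤ 1) {T T' : Bool → Bool → ℝ}
    (h : ∀ x y, T x y ≤ T' x y) : bitCorr ρ T ≤ bitCorr ρ T' := by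
  have weight_nonneg (x y : Bool) : 0 ≤ 1 + ρ * sgn x * sgn y := by
    cases x <;> cases y <;> simp only [sgn_true, sgn_false] <;> linarith
  unfold bitCorr
  gcongr with x _ y _
  exacts [weight_nonneg x y, h x y]

theorem bitCorr_mul_affine (ρ c p r q r' : ℝ) :
    bitCorr ρ (fun x y => c * ((p + r * sgn x) * (q + r' * sgn y))) =
      c * (p * q + ρ * (r * r')) := by
  simp only [bitCorr, Fintype.sum_bool, sgn_true, sgn_false]; ring

theorem bitMean_nonneg {a : Bool → ℝ} (ha : ∀ x, 0 ≤ a x) : 0 ≤ bitMean a :=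
  mul_nonneg (by norm_num) (sum_nonneg fun x _ => ha x)

theorem exists_eq_bitMean_mul_one_add_mul_sgn {a : Bool → ℝ} (ha : ∀ x, 0 ≤ a x) :
    ∃ s : ℝ, s ^ 2 ≤ 1 ∧ ∀ x, a x = bitMean a * (1 + s * sgn x) := by
  have htrue := ha true
  have hfalse := ha false
  simp only [bitMean, Fintype.sum_bool]
  rcases (add_nonneg htrue hfalse).eq_or_lt with hsum | hsum
  · have htrue_eq : a true = 0 := by linarith
    have hfalse_eq : a false = 0 := by linarith
    exact ⟨0, by norm_num, fun x => by cases x <;> simp [htrue_eq, hfalse_eq]⟩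
  · refine ⟨(a true - a false) / (a true + a false), ?_, fun x => ?_⟩
    · rw [div_pow, div_le_one (by positivity)]
      nlinarith [mul_nonneg htrue hfalse]
    · cases x <;> simp only [sgn_true, sgn_false] <;> field_simp <;> ring

theorem bitMean_pow_mul_le_bitCorr_of_nonneg {m : ℕ} (hm : 0 < m) {ρ : ℝ} (hρ0 : 0 ≤ ρ)
    (hρ : ρ ≤ 1 - 1 / m) {a b : Bool → ℝ} (ha : ∀ x, 0 ≤ a x) (hb : ∀ y, 0 ≤ b y) :
    bitMean a ^ m * bitMean b ^ m ≤ bitCorr ρ (fun x y => a x ^ m * b y ^ m) := by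
  obtain ⟨s, hs, ha_eq⟩ := exists_eq_bitMean_mul_one_add_mul_sgn ha
  obtain ⟨t, ht, hb_eq⟩ := exists_eq_bitMean_mul_one_add_mul_sgn hb
  have expand : (fun x y => a x ^ m * b y ^ m) = fun x y => bitMean a ^ m * bitMean b ^ m *
      ((evenPart m s + oddPart m s * sgn x) * (evenPart m t + oddPart m t * sgn y)) := by
    ext x y
    rw [ha_eq x, hb_eq y, mul_pow, mul_pow, one_add_mul_sgn_pow, one_add_mul_sgn_pow]; ring
  rw [expand, bitCorr_mul_affine]
  have := bitMean_nonneg ha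
  have := bitMean_nonneg hb
  exact le_mul_of_one_le_right (by positivity)
    (one_le_evenPart_mul_add_oddPart_mul hm hρ0 hρ hs ht)

theorem abs_bitMean_le (a : Bool → ℝ) : |bitMean a| ≤ bitMean fun x => |a x| := by
  rw [bitMean, bitMean, abs_mul, abs_of_pos (by norm_num : (0 : ℝ) < 2⁻¹)]
  gcongr
  exact abs_sum_le_sum_abs _ _

theorem bitMean_pow_mul_le_bitCorr {m : ℕ} (hm : Even m) (hm0 : 0 < m) {ρ : ℝ} (hρ0 : 0 ≤ ρ)
    (hρ : ρ ≤ 1 - 1 / m) (a b : Bool → ℝ) :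
    bitMean a ^ m * bitMean b ^ m ≤ bitCorr ρ (fun x y => a x ^ m * b y ^ m) := by
  have pow_le (c : Bool → ℝ) : bitMean c ^ m ≤ (bitMean fun x => |c x|) ^ m := by
    rw [← hm.pow_abs]
    exact pow_le_pow_left₀ (abs_nonneg _) (abs_bitMean_le c) m
  calc bitMean a ^ m * bitMean b ^ m
      ≤ (bitMean fun x => |a x|) ^ m * (bitMean fun y => |b y|) ^ m :=
        mul_le_mul (pow_le a) (pow_le b) (hm.pow_nonneg _) (hm.pow_nonneg _)
    _ ≤ bitCorr ρ (fun x y => |a x| ^ m * |b y| ^ m) :=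
        bitMean_pow_mul_le_bitCorr_of_nonneg hm0 hρ0 hρ (fun x => abs_nonneg _)
          (fun y => abs_nonneg _)
    _ = bitCorr ρ (fun x y => a x ^ m * b y ^ m) := by simp only [hm.pow_abs]

theorem sum_fin_succ_pi {α M : Type*} [Fintype α] [AddCommMonoid M] {n : ℕ}
    (h : (Fin (n + 1) → α) → M) :
    ∑ x, h x = ∑ a, ∑ x : Fin n → α, h (Fin.cons a x) := by
  rw [← (Fin.consEquiv fun _ => α).sum_comp h, Fintype.sum_prod_type]
  rfl

noncomputable def cubeMean {n : ℕ} (f : (Fin n → Bool) → ℝ) : ℝ := ((2 : ℝ) ^ n)⁻¹ * ∑ x, f x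

noncomputable def cubeCorr {n : ℕ} (ρ : ℝ) (F G : (Fin n → Bool) → ℝ) : ℝ :=
  ((4 : ℝ) ^ n)⁻¹ * ∑ x, ∑ y, (∏ i, (1 + ρ * sgn (x i) * sgn (y i))) * F x * G y

theorem cubeMean_succ {n : ℕ} (f : (Fin (n + 1) → Bool) → ℝ) :
    cubeMean f = bitMean fun b => cubeMean fun x => f (Fin.cons b x) := by
  simp only [cubeMean, bitMean, sum_fin_succ_pi f, mul_sum, pow_succ, mul_inv]
  exact sum_congr rfl fun _ _ => sum_congr rfl fun _ _ => by ring

theorem cubeCorr_succ {n : ℕ} (ρ : ℝ) (F G : (Fin (n + 1) → Bool) → ℝ) :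
    cubeCorr ρ F G = bitCorr ρ fun b c =>
      cubeCorr ρ (fun x => F (Fin.cons b x)) (fun y => G (Fin.cons c y)) := by
  simp only [cubeCorr, bitCorr, sum_fin_succ_pi, Fin.prod_univ_succ, Fin.cons_zero,
    Fin.cons_succ, mul_sum]
  refine sum_congr rfl fun b _ => ?_
  rw [sum_comm]
  exact sum_congr rfl fun _ _ => sum_congr rfl fun _ _ => sum_congr rfl fun _ _ => by ring

theorem cubeMean_pow_mul_le_cubeCorr {m : ℕ} (hm : Even m) (hm0 : 0 < m) {ρ : ℝ} (hρ0 : 0 ≤ ρ)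
    (hρ : ρ ≤ 1 - 1 / m) :
    ∀ {n : ℕ} (f g : (Fin n → Bool) → ℝ),
      cubeMean f ^ m * cubeMean g ^ m ≤ cubeCorr ρ (f ^ m) (g ^ m)
  | 0, f, g => by simp [cubeMean, cubeCorr]
  | n + 1, f, g => by
    have hρ1 : ρ ≤ 1 := hρ.trans (sub_le_self _ (by positivity))
    rw [cubeMean_succ f, cubeMean_succ g, cubeCorr_succ]
    exact (bitMean_pow_mul_le_bitCorr hm hm0 hρ0 hρ _ _).trans
      (bitCorr_mono (by linarith) hρ1 fun b c =>
        cubeMean_pow_mul_le_cubeCorr hm hm0 hρ0 hρ _ _)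

theorem stmt_5_general (k n : ℕ) (hk : 1 ≤ k) (ρ : ℝ)
    (hρ0 : 0 ≤ ρ) (hρ1 : ρ ≤ 1 - 1/(2*(k:ℝ)))
    (f g : (Fin n → Bool) → ℝ) :
    (((2:ℝ)^n)⁻¹ * ∑ x : Fin n → Bool, f x)^(2*k) *
        (((2:ℝ)^n)⁻¹ * ∑ y : Fin n → Bool, g y)^(2*k)
      ≤ ((4:ℝ)^n)⁻¹ * ∑ x : Fin n → Bool, ∑ y : Fin n → Bool,
          (∏ i, (1 + ρ * sgn (x i) * sgn (y i))) * f x ^ (2*k) * g y ^ (2*k) :=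
  cubeMean_pow_mul_le_cubeCorr (even_two_mul k) (by omega) hρ0 (by push_cast; exact hρ1) f g

/-- For `k, n ≥ 1`, `0 ≤ ρ ≤ 1 − 1/(2k)`, and all `f, g : {−1,1}ⁿ → ℝ`:
`4^{−n} Σ_{x,y} (∏ᵢ (1 + ρ xᵢ yᵢ)) f(x)^{2k} g(y)^{2k}
   ≥ (2^{−n} Σₓ f(x))^{2k} · (2^{−n} Σ_y g(y))^{2k}`. -/
theorem stmt_5 (k n : ℕ) (hk : 1 ≤ k) (hn : 1 ≤ n) (ρ : ℝ)
    (hρ0 : 0 ≤ ρ) (hρ1 : ρ ≤ 1 - 1/(2*(k:ℝ)))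
    (f g : (Fin n → Bool) → ℝ) :
    (((2:ℝ)^n)⁻¹ * ∑ x : Fin n → Bool, f x)^(2*k) *
        (((2:ℝ)^n)⁻¹ * ∑ y : Fin n → Bool, g y)^(2*k)
      ≤ ((4:ℝ)^n)⁻¹ * ∑ x : Fin n → Bool, ∑ y : Fin n → Bool,
          (∏ i, (1 + ρ * sgn (x i) * sgn (y i))) * f x ^ (2*k) * g y ^ (2*k) :=
  stmt_5_general k n hk ρ hρ0 hρ1 f g
end

section
/- Let k ≥ 1 be an integer and set ρ* = 1 − 1/(2k). The bivariate real polynomial P_k(a,b) = (1/4 + ρ*/4)·((1+a)^{2k}(1+b)^{2k} + (1−a)^{2k}(1−b)^{2k}) + (1/4 − ρ*/4)·((1+a)^{2k}(1−b)^{2k} + (1−a)^{2k}(1+b)^{2k}) − 1 is a sum of squares of polynomials in a and b. -/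
/-!
With `s = a + b`, `d = a - b`, `t = ab` one has `(1 ± a)(1 ± b) = 1 + t ± s` and
`(1 ± a)(1 ∓ b) = 1 - t ± d`, so `P_k` is a nonnegative combination of the even parts
`(x + y)^(2k) + (x - y)^(2k)`, whose binomial terms beyond the constant one are squares.
Writing `d² = s² - 4t` in the quadratic `d`-term leaves `Q(t)` with `Q = twoPointPoly (2k) ρ`.
At `ρ = ρ*` its coefficients `c_m` vanish for `m < 2`, are nonnegative for even `m` and satisfy
`c_(2j+1)² ≤ c_(2j) c_(2j+2)` (the choice of `ρ*` is exactly what kills the linear coefficient).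
Hence the tridiagonal Gram matrix of `Q` in the basis `1, t, …, t^k` is a sum of positive
semidefinite `2 × 2` blocks, and `Q` is a sum of squares.
-/

open Finset

theorem IsSumSq.map {R S : Type*} [Semiring R] [Semiring S] (f : R →+* S) {r : R}
    (h : IsSumSq r) : IsSumSq (f r) := by
  induction h with
  | zero => simp
  | sq_add a _ ih => simpa using ih.sq_add (f a)

theorem IsSumSq.exists_fin_sum_sq {R : Type*} [CommSemiring R] {r : R} (h : IsSumSq r) :
    ∃ (m : ℕ) (q : Fin m → R), r = ∑ j, q j ^ 2 := by
  induction h with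
  | zero => exact ⟨0, Fin.elim0, by simp⟩
  | sq_add a _ ih =>
    obtain ⟨m, q, rfl⟩ := ih
    exact ⟨m + 1, Fin.cons a q, by simp [Fin.sum_univ_succ, sq]⟩

section RealCoefficients

variable {A : Type*} [CommRing A] (f : ℝ →+* A)

theorem isSumSq_map_mul_sq {c : ℝ} (hc : 0 ≤ c) (x : A) : IsSumSq (f c * x ^ 2) := by
  rw [← Real.mul_self_sqrt hc, map_mul, ← sq, ← mul_pow]
  exact (IsSquare.sq _).isSumSq

theorem isSumSq_map_mul {c : ℝ} (hc : 0 ≤ c) {x : A} (hx : IsSumSq x) : IsSumSq (f c * x) := by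
  rw [← Real.mul_self_sqrt hc, map_mul]
  exact (IsSumSq.mul_self _).mul hx

theorem isSumSq_quadratic {a b c : ℝ} (ha : 0 ≤ a) (hc : 0 ≤ c) (hb : b ^ 2 ≤ 4 * a * c)
    (x y : A) : IsSumSq (f a * x ^ 2 + f b * (x * y) + f c * y ^ 2) := by
  rcases ha.eq_or_lt with rfl | ha
  · obtain rfl : b = 0 := by nlinarith
    simpa using isSumSq_map_mul_sq f hc y
  have hsq : f a * x ^ 2 + f b * (x * y) + f c * y ^ 2
      = f a * (x + f (b / (2 * a)) * y) ^ 2 + f (c - b ^ 2 / (4 * a)) * y ^ 2 := by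
    have hb : f b = 2 * f a * f (b / (2 * a)) := by
      rw [← map_ofNat f 2, ← map_mul, ← map_mul]; congr 1; field_simp
    have hc : f c = f a * f (b / (2 * a)) ^ 2 + f (c - b ^ 2 / (4 * a)) := by
      rw [← map_pow, ← map_mul, ← map_add]; congr 1; field_simp; ring
    rw [hb, hc]; ring
  have hc' : 0 ≤ c - b ^ 2 / (4 * a) := by
    rw [sub_nonneg, div_le_iff₀ (by positivity)]; linarith
  rw [hsq]
  exact (isSumSq_map_mul_sq f ha.le _).add (isSumSq_map_mul_sq f hc' y)

end RealCoefficients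

section Binomial

variable {R : Type*} [CommRing R]

theorem add_pow_add_sub_pow (x y : R) (n : ℕ) :
    (x + y) ^ n + (x - y) ^ n
      = ∑ m ∈ range (n + 1), x ^ (n - m) * y ^ m * n.choose m * (1 + (-1) ^ m) := by
  rw [add_comm x y, sub_eq_neg_add, add_pow, add_pow, ← sum_add_distrib]
  refine sum_congr rfl fun m _ => ?_
  rw [neg_pow]
  ring

theorem isSumSq_pow_mul_pow_mul_choose {n : ℕ} (hn : Even n) (x y : R) (m : ℕ) :
    IsSumSq (x ^ (n - m) * y ^ m * n.choose m * (1 + (-1) ^ m)) := by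
  rcases Nat.even_or_odd m with ⟨i, rfl⟩ | hm
  · obtain ⟨j, hj⟩ : Even (n - (i + i)) := by
      rcases hn with ⟨N, rfl⟩; exact ⟨N - i, by omega⟩
    have h : x ^ (n - (i + i)) * y ^ (i + i) * n.choose (i + i) * (1 + (-1) ^ (i + i))
        = (x ^ j * y ^ i) ^ 2 * ((2 * n.choose (i + i) : ℕ) : R) := by
      rw [hj, Even.neg_one_pow ⟨i, rfl⟩]; push_cast; ring
    rw [h]
    exact (IsSquare.sq _).isSumSq.mul (.natCast _)
  · simp [hm.neg_one_pow]

theorem isSumSq_add_pow_add_sub_pow_sub {n : ℕ} (hn : Even n) (x y : R) :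
    IsSumSq ((x + y) ^ n + (x - y) ^ n - 2 * x ^ n) := by
  rw [add_pow_add_sub_pow, sum_range_succ']
  refine (congrArg IsSumSq ?_).mpr
    (IsSumSq.sum fun m (_ : m ∈ range n) => isSumSq_pow_mul_pow_mul_choose hn x y (m + 1))
  rw [Nat.choose_zero_right, Nat.sub_zero]
  ring

theorem isSumSq_add_pow_add_sub_pow_sub_sub {n : ℕ} (hn : Even n) (h2 : 2 ≤ n) (x y : R) :
    IsSumSq ((x + y) ^ n + (x - y) ^ n - 2 * x ^ n - 2 * n.choose 2 * x ^ (n - 2) * y ^ 2) := by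
  obtain ⟨n, rfl⟩ : ∃ n', n = n' + 2 := ⟨n - 2, by omega⟩
  rw [add_pow_add_sub_pow, sum_range_succ', sum_range_succ', sum_range_succ']
  refine (congrArg IsSumSq ?_).mpr
    (IsSumSq.sum fun m (_ : m ∈ range n) => isSumSq_pow_mul_pow_mul_choose hn x y (m + 3))
  rw [Nat.choose_zero_right, Nat.sub_zero, Nat.add_sub_cancel]
  ring

end Binomial

theorem Nat.add_two_mul_add_one_mul_choose_eq (n i : ℕ) :
    (n + 2) * (n + 1) * n.choose i = (n + 2).choose (i + 1) * (i + 1) * (n + 1 - i) := by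
  rw [mul_assoc, Nat.add_one_mul_choose_eq, ← mul_assoc, mul_comm (n + 2),
    Nat.choose_mul_succ_eq, Nat.add_sub_add_right]
  ring

theorem Nat.cast_mul_sub_one_mul_choose_sub_two (n i : ℕ) (hn : 2 ≤ n) :
    (n * (n - 1) * (n - 2).choose i : ℝ) = n.choose (i + 1) * (i + 1) * (n - (i + 1)) := by
  obtain ⟨n, rfl⟩ : ∃ n', n = n' + 2 := ⟨n - 2, by omega⟩
  rcases le_or_gt i (n + 1) with hi | hi
  · have := congrArg (Nat.cast : ℕ → ℝ) (Nat.add_two_mul_add_one_mul_choose_eq n i)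
    push_cast [Nat.cast_sub hi] at this
    rw [Nat.add_sub_cancel]; push_cast; linear_combination this
  · rw [Nat.choose_eq_zero_of_lt (by omega), Nat.choose_eq_zero_of_lt (by omega)]; simp

theorem Nat.choose_succ_mul_sq_le (m l : ℕ) :
    ((m + l + 2).choose (m + 1) * (m * l)) ^ 2
      ≤ (m + l + 2).choose m * (m * l + 3 * m + l + 2)
        * ((m + l + 2).choose (m + 2) * (m * l + m + 3 * l + 2)) := by
  set n := m + l + 2
  have h₁ : n.choose (m + 1) * (m + 1) = n.choose m * (l + 2) := by
    rw [Nat.choose_succ_right_eq]; congr 1; omega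
  have h₂ : n.choose (m + 2) * (m + 2) = n.choose (m + 1) * (l + 1) := by
    rw [Nat.choose_succ_right_eq]; congr 1; omega
  -- the difference of the two sides has only nonnegative coefficients
  have key : m ^ 2 * l ^ 2 * ((m + 2) * (l + 2))
      ≤ (m + 1) * (l + 1) * ((m * l + 3 * m + l + 2) * (m * l + m + 3 * l + 2)) := by
    nlinarith [Nat.zero_le (m * l), Nat.zero_le (m ^ 2 * l), Nat.zero_le (m * l ^ 2)]
  refine Nat.le_of_mul_le_mul_right ?_ (by positivity : 0 < (m + 2) * (l + 2))
  calc ((n.choose (m + 1) * (m * l)) ^ 2) * ((m + 2) * (l + 2))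
      = n.choose (m + 1) ^ 2 * (m ^ 2 * l ^ 2 * ((m + 2) * (l + 2))) := by ring
    _ ≤ n.choose (m + 1) ^ 2
          * ((m + 1) * (l + 1) * ((m * l + 3 * m + l + 2) * (m * l + m + 3 * l + 2))) :=
        Nat.mul_le_mul_left _ key
    _ = (n.choose (m + 1) * (m + 1)) * (n.choose (m + 1) * (l + 1))
          * ((m * l + 3 * m + l + 2) * (m * l + m + 3 * l + 2)) := by ring
    _ = _ := by rw [h₁, ← h₂]; ring

namespace Polynomial

theorem coeff_one_sub_X_pow {R : Type*} [CommRing R] (n k : ℕ) :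
    ((1 - X : R[X]) ^ n).coeff k = (-1) ^ k * n.choose k := by
  induction n generalizing k with
  | zero => cases k <;> simp [coeff_one]
  | succ n ih =>
    cases k with
    | zero => simp [pow_succ, mul_sub, ih]
    | succ k =>
      rw [pow_succ, mul_sub, mul_one, coeff_sub, ih, mul_comm _ X, coeff_X_mul, ih,
        Nat.choose_succ_succ', Nat.cast_add]
      ring

theorem isSumSq_of_coeff_sq_le {p : ℝ[X]} {N : ℕ} (hp : p.natDegree ≤ 2 * N)
    (heven : ∀ j ≤ N, 0 ≤ p.coeff (2 * j))
    (hodd : ∀ j < N, p.coeff (2 * j + 1) ^ 2 ≤ p.coeff (2 * j) * p.coeff (2 * j + 2)) :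
    IsSumSq p := by
  -- each even coefficient is split in halves between the two neighbouring 2 × 2 blocks
  have key : ∀ M ≤ N, IsSumSq (∑ m ∈ range (2 * M + 1), C (p.coeff m) * X ^ m
      - C (p.coeff (2 * M) / 2) * (X ^ M) ^ 2) := by
    intro M
    induction M with
    | zero =>
      intro _
      simpa [← sub_mul, ← map_sub] using
        isSumSq_map_mul_sq C (by linarith [heven 0 (Nat.zero_le N)]) 1
    | succ M ih =>
      intro hM
      have hblock := isSumSq_quadratic C (div_nonneg (heven M (by omega)) zero_le_two)
        (div_nonneg (heven (M + 1) hM) zero_le_two) (b := p.coeff (2 * M + 1))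
        (by rw [show 2 * (M + 1) = 2 * M + 2 by ring]; linarith [hodd M (by omega)])
        (X ^ M) (X ^ (M + 1))
      have hhalf : C (p.coeff (2 * M + 2)) = 2 * C (p.coeff (2 * M + 2) / 2) := by
        rw [← map_ofNat C 2, ← map_mul, mul_div_cancel₀ _ two_ne_zero]
      refine (congrArg IsSumSq ?_).mpr ((ih (by omega)).add hblock)
      rw [show 2 * (M + 1) + 1 = 2 * M + 1 + 1 + 1 by ring, sum_range_succ, sum_range_succ,
        show 2 * (M + 1) = 2 * M + 2 by ring, hhalf]
      ring
  rw [p.as_sum_range' (2 * N + 1) (by omega)]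
  simp_rw [← C_mul_X_pow_eq_monomial]
  simpa using (key N le_rfl).add
    (isSumSq_map_mul_sq C (div_nonneg (heven N le_rfl) zero_le_two) (X ^ N))

end Polynomial

section TwoPointPoly

open Polynomial

noncomputable def twoPointPoly (n : ℕ) (ρ : ℝ) : ℝ[X] :=
  C ((1 + ρ) / 2) * (1 + X) ^ n + C ((1 - ρ) / 2) * (1 - X) ^ n - 1
    - C ((1 - ρ) * n * (n - 1)) * (X * (1 - X) ^ (n - 2))

theorem natDegree_twoPointPoly_le {n : ℕ} (hn : 1 ≤ n) (ρ : ℝ) :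
    (twoPointPoly n ρ).natDegree ≤ n := by
  unfold twoPointPoly
  compute_degree
  all_goals omega

theorem coeff_twoPointPoly_zero (n : ℕ) (ρ : ℝ) : (twoPointPoly n ρ).coeff 0 = 0 := by
  rw [twoPointPoly, coeff_sub, coeff_sub, coeff_add, coeff_C_mul, coeff_C_mul, coeff_C_mul,
    coeff_X_mul_zero, coeff_one_add_X_pow, coeff_one_sub_X_pow, coeff_one_zero]
  simp only [pow_zero, Nat.choose_zero_right, Nat.cast_one]
  ring

theorem coeff_twoPointPoly_succ (n i : ℕ) (ρ : ℝ) :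
    (twoPointPoly n ρ).coeff (i + 1) = ((1 + ρ) / 2 - (-1) ^ i * (1 - ρ) / 2) * n.choose (i + 1)
      - (1 - ρ) * n * (n - 1) * (-1) ^ i * (n - 2).choose i := by
  rw [twoPointPoly, coeff_sub, coeff_sub, coeff_add, coeff_C_mul, coeff_C_mul, coeff_C_mul,
    coeff_X_mul, coeff_one_add_X_pow, coeff_one_sub_X_pow, coeff_one_sub_X_pow, coeff_one,
    if_neg (Nat.succ_ne_zero i)]
  ring

variable {n : ℕ}

theorem mul_coeff_twoPointPoly_succ (hn : 2 ≤ n) (i : ℕ) :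
    n * (twoPointPoly n (1 - 1 / n)).coeff (i + 1)
      = n.choose (i + 1) * (n - (1 + (-1) ^ i) / 2 - (-1) ^ i * (i + 1) * (n - (i + 1))) := by
  have hn0 : (n : ℝ) ≠ 0 := by positivity
  rw [coeff_twoPointPoly_succ]
  have := Nat.cast_mul_sub_one_mul_choose_sub_two n i hn
  field_simp
  linear_combination (-(2:ℝ) * (-1) ^ i) * this

theorem mul_coeff_twoPointPoly_of_even (hn : 2 ≤ n) {m : ℕ} (hm : Even m) (h0 : m ≠ 0) :
    n * (twoPointPoly n (1 - 1 / n)).coeff m = n.choose m * (n + m * (n - m)) := by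
  obtain ⟨i, rfl⟩ : ∃ i, m = i + 1 := ⟨m - 1, by omega⟩
  have hi : Odd i := Nat.not_even_iff_odd.mp (Nat.even_add_one.mp hm)
  rw [mul_coeff_twoPointPoly_succ hn, hi.neg_one_pow]
  push_cast; ring

theorem mul_coeff_twoPointPoly_of_odd (hn : 2 ≤ n) {m : ℕ} (hm : Odd m) :
    n * (twoPointPoly n (1 - 1 / n)).coeff m = -(n.choose m * ((m - 1) * (n - 1 - m))) := by
  obtain ⟨i, rfl⟩ := hm
  rw [mul_coeff_twoPointPoly_succ hn, (even_two_mul i).neg_one_pow]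
  push_cast; ring

theorem coeff_twoPointPoly_nonneg (hn : 2 ≤ n) {m : ℕ} (hm : Even m) (hmn : m ≤ n) :
    0 ≤ (twoPointPoly n (1 - 1 / n)).coeff m := by
  rcases eq_or_ne m 0 with rfl | h0
  · rw [coeff_twoPointPoly_zero]
  refine nonneg_of_mul_nonneg_right ?_ (by positivity : (0 : ℝ) < n)
  rw [mul_coeff_twoPointPoly_of_even hn hm h0]
  have : (m : ℝ) ≤ n := by exact_mod_cast hmn
  have : 0 ≤ (m : ℝ) * (n - m) := mul_nonneg (by positivity) (by linarith)
  positivity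

theorem coeff_twoPointPoly_sq_le (hn : 2 ≤ n) {m : ℕ} (hm : Even m) (hmn : m + 2 ≤ n) :
    (twoPointPoly n (1 - 1 / n)).coeff (m + 1) ^ 2
      ≤ (twoPointPoly n (1 - 1 / n)).coeff m * (twoPointPoly n (1 - 1 / n)).coeff (m + 2) := by
  rcases eq_or_ne m 0 with rfl | h0
  · have h1 : (twoPointPoly n (1 - 1 / n)).coeff 1 = 0 := by
      have := mul_coeff_twoPointPoly_of_odd hn odd_one
      simpa [show (n : ℝ) ≠ 0 by positivity] using this
    rw [zero_add, h1, coeff_twoPointPoly_zero]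
    simp
  have e₀ := mul_coeff_twoPointPoly_of_even hn hm h0
  have e₁ := mul_coeff_twoPointPoly_of_odd hn hm.add_one
  have e₂ := mul_coeff_twoPointPoly_of_even hn (hm.add even_two) (by omega)
  set c₀ := (twoPointPoly n (1 - 1 / n)).coeff m
  set c₁ := (twoPointPoly n (1 - 1 / n)).coeff (m + 1)
  set c₂ := (twoPointPoly n (1 - 1 / n)).coeff (m + 2)
  obtain ⟨l, rfl⟩ : ∃ l, n = m + l + 2 := ⟨n - m - 2, by omega⟩
  have key : (((m + l + 2).choose (m + 1) * (m * l)) ^ 2 : ℝ)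
      ≤ (m + l + 2).choose m * (m * l + 3 * m + l + 2)
        * ((m + l + 2).choose (m + 2) * (m * l + m + 3 * l + 2)) := by
    exact_mod_cast Nat.choose_succ_mul_sq_le m l
  refine le_of_mul_le_mul_left ?_ (by positivity : (0 : ℝ) < ↑(m + l + 2) ^ 2)
  push_cast at e₀ e₁ e₂ ⊢
  calc _ = ((m + l + 2) * c₁) ^ 2 := by ring
    _ = (((m + l + 2).choose (m + 1) * (m * l)) ^ 2 : ℝ) := by rw [e₁]; ring
    _ ≤ _ := key
    _ = ((m + l + 2) * c₀) * ((m + l + 2) * c₂) := by rw [e₀, e₂]; ring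
    _ = _ := by ring

theorem isSumSq_twoPointPoly (hn : Even n) (h2 : 2 ≤ n) :
    IsSumSq (twoPointPoly n (1 - 1 / n)) := by
  obtain ⟨N, hN⟩ := hn
  refine isSumSq_of_coeff_sq_le (N := N) ?_
    (fun j _ => coeff_twoPointPoly_nonneg h2 (even_two_mul j) (by omega))
    (fun j _ => coeff_twoPointPoly_sq_le h2 (even_two_mul j) (by omega))
  rw [two_mul, ← hN]
  exact natDegree_twoPointPoly_le (by omega) _

end TwoPointPoly

open MvPolynomial

theorem two_point_decomposition {σ : Type*} (a b : MvPolynomial σ ℝ) (ρ : ℝ) {k : ℕ}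
    (hk : 1 ≤ k) :
    C (1/4 + ρ/4) * ((1 + a)^(2*k) * (1 + b)^(2*k) + (1 - a)^(2*k) * (1 - b)^(2*k))
      + C (1/4 - ρ/4) * ((1 + a)^(2*k) * (1 - b)^(2*k) + (1 - a)^(2*k) * (1 + b)^(2*k)) - 1
    = C (1/4 + ρ/4) * ((1 + a * b + (a + b)) ^ (2 * k) + (1 + a * b - (a + b)) ^ (2 * k)
          - 2 * (1 + a * b) ^ (2 * k))
      + C (1/4 - ρ/4) * ((1 - a * b + (a - b)) ^ (2 * k) + (1 - a * b - (a - b)) ^ (2 * k)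
          - 2 * (1 - a * b) ^ (2 * k)
          - 2 * ((2 * k).choose 2 : MvPolynomial σ ℝ) * (1 - a * b) ^ (2 * k - 2) * (a - b) ^ 2)
      + C ((1/4 - ρ/4) * (2 * (2 * k).choose 2)) * ((a + b) * (1 - a * b) ^ (k - 1)) ^ 2
      + (twoPointPoly (2 * k) ρ).eval₂ C (a * b) := by
  obtain ⟨K, rfl⟩ : ∃ K, k = K + 1 := ⟨k - 1, by omega⟩
  apply MvPolynomial.funext
  intro x
  simp only [twoPointPoly, map_add, map_sub, map_mul, map_pow, map_one, map_natCast, eval_C,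
    Polynomial.eval₂_add, Polynomial.eval₂_sub, Polynomial.eval₂_mul, Polynomial.eval₂_pow,
    Polynomial.eval₂_C, Polynomial.eval₂_X, Polynomial.eval₂_one, Polynomial.eval₂_natCast,
    map_ofNat]
  generalize eval x a = a, eval x b = b
  rw [← mul_pow, ← mul_pow, ← mul_pow, ← mul_pow, Nat.cast_choose_two]
  simp only [show 2 * (K + 1) - 2 = 2 * K by omega, Nat.add_sub_cancel]
  push_cast
  ring

/-- The Two-Point Inequality polynomial
`P_k(a,b) = (1/4 + ρ*/4)((1+a)^{2k}(1+b)^{2k} + (1−a)^{2k}(1−b)^{2k})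
          + (1/4 − ρ*/4)((1+a)^{2k}(1−b)^{2k} + (1−a)^{2k}(1+b)^{2k}) − 1`,
with `ρ* = 1 − 1/(2k)`, is a sum of squares in `ℝ[a,b]`. -/
theorem stmt_7 (k : ℕ) (hk : 1 ≤ k) :
    ∃ (m : ℕ) (q : Fin m → MvPolynomial (Fin 2) ℝ),
      C (1/4 + (1 - 1/(2*(k:ℝ)))/4) *
          ((1 + X 0)^(2*k) * (1 + X 1)^(2*k) + (1 - X 0)^(2*k) * (1 - X 1)^(2*k))
        + C (1/4 - (1 - 1/(2*(k:ℝ)))/4) *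
          ((1 + X 0)^(2*k) * (1 - X 1)^(2*k) + (1 - X 0)^(2*k) * (1 + X 1)^(2*k))
        - 1
      = ∑ j, (q j)^2 := by
  refine IsSumSq.exists_fin_sum_sq ?_
  have hk' : 1 / (2 * (k : ℝ)) ≤ 1 := by
    rw [div_le_one (by positivity)]; linarith [(by exact_mod_cast hk : (1 : ℝ) ≤ k)]
  have hα : 0 ≤ 1/4 + (1 - 1/(2*(k:ℝ)))/4 := by linarith
  have hβ : 0 ≤ 1/4 - (1 - 1/(2*(k:ℝ)))/4 := by
    linarith [(by positivity : (0 : ℝ) ≤ 1 / (2 * (k : ℝ)))]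
  have hQ : IsSumSq ((twoPointPoly (2 * k) (1 - 1 / (2 * (k : ℝ)))).eval₂ C
      (X 0 * X 1 : MvPolynomial (Fin 2) ℝ)) := by
    simpa using (isSumSq_twoPointPoly (even_two_mul k) (by omega)).map
      (Polynomial.eval₂RingHom C (X 0 * X 1 : MvPolynomial (Fin 2) ℝ))
  rw [two_point_decomposition (X 0) (X 1) _ hk]
  exact (((isSumSq_map_mul C hα (isSumSq_add_pow_add_sub_pow_sub (even_two_mul k) _ _)).add
    (isSumSq_map_mul C hβ
      (isSumSq_add_pow_add_sub_pow_sub_sub (even_two_mul k) (by omega) _ _))).add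
    (isSumSq_map_mul_sq C (by positivity) _)).add hQ
end
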